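/- arXiv:1502.03219 — 2 statements merged into one kernel-verified Lean document; each statement's English description precedes it below -/
import Mathlib

section
/- If a group G ≅ A₅ acts on a set with an orbit of length 30, then the stabilizer of a point in that orbit has order 2, and the orbit is G-equivariantly isomorphic to the product action of A₅ on (A₅/G₀) × (A₅/H₀), where |G₀| = 12 and |H₀| = 10. -/
open Equiv Equiv.Perm MulAction Subgroup

private abbrev A5 := alternatingGroup (Fin 5)

private instance stmt6.decMemA5 : DecidablePred (· ∈ alternatingGroup (Fin 5)) :=
  fun g => decidable_of_iff _ (Equiv.Perm.mem_alternatingGroup (f := g)).symm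

private def stmt6.sp : Perm (Fin 5) := c[(0:Fin 5),1] * c[(2:Fin 5),3]
private def stmt6.rp : Perm (Fin 5) := c[(2:Fin 5),0,4,1,3]

namespace stmt6

def sA : A5 := ⟨sp, by decide⟩

def G0 : Subgroup A5 where
  carrier := {g | g.1 4 = 4}
  one_mem' := rfl
  mul_mem' := by
    intro a b ha hb
    show (a.1 * b.1) 4 = 4
    simp only [Equiv.Perm.mul_apply]
    rw [hb, ha]
  inv_mem' := by
    intro a ha
    show a.1⁻¹ 4 = 4
    rw [Perm.inv_eq_iff_eq]
    exact ha.symm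

def dih (r : Perm (Fin 5)) : Subgroup A5 where
  carrier := {g | g.1 * r * g.1⁻¹ = r ∨ g.1 * r * g.1⁻¹ = r⁻¹}
  one_mem' := by
    show ((1 : A5) : Perm (Fin 5)) * r * ((1 : A5) : Perm (Fin 5))⁻¹ = r ∨ _
    left; simp
  mul_mem' := by
    intro a b ha hb
    have key : ((a * b : A5) : Perm (Fin 5)) * r * ((a * b : A5) : Perm (Fin 5))⁻¹
        = ↑a * (↑b * r * (↑b)⁻¹) * (↑a)⁻¹ := by
      simp only [Subgroup.coe_mul]; group
    have inv_conj : (↑a : Perm (Fin 5)) * r⁻¹ * (↑a)⁻¹ = ((↑a : Perm (Fin 5)) * r * (↑a)⁻¹)⁻¹ := by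
      group
    show ((a * b : A5) : Perm (Fin 5)) * r * ((a * b : A5) : Perm (Fin 5))⁻¹ = r ∨ _
    rcases ha with ha | ha <;> rcases hb with hb | hb
    · left;  rw [key, hb, ha]
    · right; rw [key, hb, inv_conj, ha]
    · right; rw [key, hb, ha]
    · left;  rw [key, hb, inv_conj, ha, inv_inv]
  inv_mem' := by
    intro a ha
    show ((a⁻¹ : A5) : Perm (Fin 5)) * r * ((a⁻¹ : A5) : Perm (Fin 5))⁻¹ = r ∨ _
    simp only [InvMemClass.coe_inv, inv_inv]
    rcases ha with ha | ha
    · left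
      have ha' : (↑a : Perm (Fin 5)) * r = r * ↑a := mul_inv_eq_iff_eq_mul.mp ha
      rw [mul_assoc, inv_mul_eq_iff_eq_mul]
      exact ha'.symm
    · right
      have ha2 : (↑a : Perm (Fin 5)) * r⁻¹ * (↑a)⁻¹ = r := by
        rw [show (↑a : Perm (Fin 5)) * r⁻¹ * (↑a)⁻¹ = ((↑a : Perm (Fin 5)) * r * (↑a)⁻¹)⁻¹
          from by group, ha, inv_inv]
      have ha2' : (↑a : Perm (Fin 5)) * r⁻¹ = r * ↑a := mul_inv_eq_iff_eq_mul.mp ha2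
      rw [mul_assoc, inv_mul_eq_iff_eq_mul]
      exact ha2'.symm

def H0 : Subgroup A5 := dih rp

instance : DecidablePred (· ∈ G0) :=
  fun g => decidable_of_iff (g.1 4 = 4) Iff.rfl
instance : DecidablePred (· ∈ H0) :=
  fun g => decidable_of_iff (g.1 * rp * g.1⁻¹ = rp ∨ g.1 * rp * g.1⁻¹ = rp⁻¹) Iff.rfl
instance : DecidablePred (· ∈ G0 ⊓ H0) :=
  fun g => decidable_of_iff (g ∈ G0 ∧ g ∈ H0) (Subgroup.mem_inf).symm

lemma cardA5 : Nat.card A5 = 60 := by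
  rw [Nat.card_eq_fintype_card]; decide

lemma cardG0 : Nat.card G0 = 12 := by
  rw [Nat.card_eq_fintype_card]; decide

lemma cardH0 : Nat.card H0 = 10 := by
  rw [Nat.card_eq_fintype_card]; decide

lemma card_inf : Nat.card (G0 ⊓ H0 : Subgroup A5) = 2 := by
  rw [Nat.card_eq_fintype_card]; decide

lemma sA_ne_one : sA ≠ 1 := by decide

lemma sA_mem_inf : sA ∈ G0 ⊓ H0 := by
  rw [Subgroup.mem_inf]
  constructor
  · show sA.1 4 = 4
    decide
  · show sA.1 * rp * sA.1⁻¹ = rp ∨ sA.1 * rp * sA.1⁻¹ = rp⁻¹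
    right
    decide

set_option maxRecDepth 40000 in
lemma conj_key : ∀ s : A5, s ≠ 1 → s * s = 1 → ∃ g : A5, g * s * g⁻¹ = sA := by decide

lemma inf_eq : G0 ⊓ H0 = Subgroup.zpowers sA := by
  haveI : Fact (Nat.Prime 2) := ⟨by norm_num⟩
  have horder : orderOf sA = 2 := orderOf_eq_prime (by decide) sA_ne_one
  refine (Subgroup.eq_of_le_of_card_ge (Subgroup.zpowers_le.mpr sA_mem_inf)
    (le_of_eq ?_)).symm
  rw [card_inf, Nat.card_zpowers, horder]

lemma oe_smul {X : Type*} [MulAction A5 X] (x : X) (g' : A5) (y : MulAction.orbit A5 x) :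
    MulAction.orbitEquivQuotientStabilizer A5 x (g' • y) =
      g' • MulAction.orbitEquivQuotientStabilizer A5 x y := by
  apply (MulAction.orbitEquivQuotientStabilizer A5 x).symm.injective
  rw [Equiv.symm_apply_apply]
  obtain ⟨a, hy⟩ := QuotientGroup.mk_surjective (MulAction.orbitEquivQuotientStabilizer A5 x y)
  have hy' : y = (MulAction.orbitEquivQuotientStabilizer A5 x).symm (QuotientGroup.mk a) := by
    rw [hy, Equiv.symm_apply_apply]
  rw [← hy, MulAction.Quotient.smul_mk]
  apply Subtype.ext
  rw [MulAction.orbit.coe_smul, hy', MulAction.orbitEquivQuotientStabilizer_symm_apply,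
    MulAction.orbitEquivQuotientStabilizer_symm_apply]
  simp [smul_eq_mul, mul_smul]

end stmt6

theorem stmt6 {X : Type*} [MulAction (alternatingGroup (Fin 5)) X] (x : X)
    (h : Nat.card (MulAction.orbit (alternatingGroup (Fin 5)) x) = 30) :
    Nat.card (MulAction.stabilizer (alternatingGroup (Fin 5)) x) = 2 ∧
    ∃ G₀ H₀ : Subgroup (alternatingGroup (Fin 5)),
      Nat.card G₀ = 12 ∧ Nat.card H₀ = 10 ∧
      ∃ e : MulAction.orbit (alternatingGroup (Fin 5)) x ≃
          (alternatingGroup (Fin 5) ⧸ G₀) × (alternatingGroup (Fin 5) ⧸ H₀),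
        ∀ (g : alternatingGroup (Fin 5)) (y : MulAction.orbit (alternatingGroup (Fin 5)) x),
          e (g • y) = g • e y := by
  classical
  set S : Subgroup A5 := MulAction.stabilizer A5 x with hSdef
  have hq : Nat.card (A5 ⧸ S) = 30 := by
    rw [← Nat.card_congr (MulAction.orbitEquivQuotientStabilizer A5 x)]
    exact h
  have hidx : S.index = 30 := by rw [Subgroup.index_eq_card]; exact hq
  have hcardS : Nat.card S = 2 := by
    have := Subgroup.card_mul_index S
    rw [hidx, stmt6.cardA5] at this
    omega
  refine ⟨hcardS, ?_⟩
  have : Nontrivial S := Finite.one_lt_card_iff_nontrivial.mp (by omega)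
  obtain ⟨σ, hσS, hσ1⟩ := (Subgroup.nontrivial_iff_exists_ne_one S).mp this
  have hord : orderOf σ = 2 := by
    have hdvd : Nat.card (Subgroup.zpowers σ) ∣ Nat.card S :=
      Subgroup.card_dvd_of_le (Subgroup.zpowers_le.mpr hσS)
    rw [Nat.card_zpowers, hcardS] at hdvd
    rcases (Nat.dvd_prime Nat.prime_two).mp hdvd with h1 | h2
    · exact absurd (orderOf_eq_one_iff.mp h1) hσ1
    · exact h2
  have hS_eq : S = Subgroup.zpowers σ :=
    (Subgroup.eq_of_le_of_card_ge (Subgroup.zpowers_le.mpr hσS)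
      (le_of_eq (by rw [hcardS, Nat.card_zpowers, hord]))).symm
  have hσsq : σ * σ = 1 := by
    rw [← sq, ← hord]
    exact pow_orderOf_eq_one σ
  obtain ⟨g, hg⟩ := stmt6.conj_key σ hσ1 hσsq
  set φ : A5 →* A5 := (MulAut.conj g⁻¹).toMonoidHom with hφdef
  have hφinj : Function.Injective φ := (MulAut.conj g⁻¹).injective
  have hφsA : φ stmt6.sA = σ := by
    simp only [hφdef, MulAut.conj_apply, MulEquiv.coe_toMonoidHom, ← hg]
    group
  refine ⟨stmt6.G0.map φ, stmt6.H0.map φ, ?_, ?_, ?_⟩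
  · rw [← Nat.card_congr (Subgroup.equivMapOfInjective stmt6.G0 φ hφinj).toEquiv]
    exact stmt6.cardG0
  · rw [← Nat.card_congr (Subgroup.equivMapOfInjective stmt6.H0 φ hφinj).toEquiv]
    exact stmt6.cardH0
  set G₀ := stmt6.G0.map φ with hG₀def
  set H₀ := stmt6.H0.map φ with hH₀def
  have hinf : G₀ ⊓ H₀ = S := by
    rw [hG₀def, hH₀def, ← Subgroup.map_inf _ _ φ hφinj, stmt6.inf_eq,
      MonoidHom.map_zpowers, hφsA, hS_eq]
  have hSG : S ≤ G₀ := hinf ▸ inf_le_left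
  have hSH : S ≤ H₀ := hinf ▸ inf_le_right
  have hidxG : G₀.index = 5 := by
    have := Subgroup.card_mul_index G₀
    rw [stmt6.cardA5, ← Nat.card_congr (Subgroup.equivMapOfInjective stmt6.G0 φ hφinj).toEquiv,
      stmt6.cardG0] at this
    omega
  have hidxH : H₀.index = 6 := by
    have := Subgroup.card_mul_index H₀
    rw [stmt6.cardA5, ← Nat.card_congr (Subgroup.equivMapOfInjective stmt6.H0 φ hφinj).toEquiv,
      stmt6.cardH0] at this
    omega
  set f : (A5 ⧸ S) → (A5 ⧸ G₀) × (A5 ⧸ H₀) :=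
    fun q => (Subgroup.quotientMapOfLE hSG q, Subgroup.quotientMapOfLE hSH q) with hfdef
  have hfinj : Function.Injective f := by
    intro q₁ q₂ hq12
    induction q₁ using QuotientGroup.induction_on with
    | H a =>
    induction q₂ using QuotientGroup.induction_on with
    | H b =>
    simp only [hfdef, Subgroup.quotientMapOfLE_apply_mk, Prod.mk.injEq] at hq12
    obtain ⟨h1, h2⟩ := hq12
    rw [QuotientGroup.eq] at h1 h2 ⊢
    rw [← hinf]
    exact ⟨h1, h2⟩
  have hfbij : Function.Bijective f := by
    rw [Nat.bijective_iff_injective_and_card]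
    refine ⟨hfinj, ?_⟩
    rw [hq, Nat.card_prod, ← Subgroup.index_eq_card, ← Subgroup.index_eq_card, hidxG, hidxH]
  refine ⟨(MulAction.orbitEquivQuotientStabilizer A5 x).trans (Equiv.ofBijective f hfbij), ?_⟩
  intro g' y
  simp only [Equiv.trans_apply, Equiv.ofBijective_apply, stmt6.oe_smul]
  obtain ⟨a, hz⟩ := QuotientGroup.mk_surjective (MulAction.orbitEquivQuotientStabilizer A5 x y)
  rw [← hz, MulAction.Quotient.smul_mk]
  simp only [hfdef, Subgroup.quotientMapOfLE_apply_mk]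
  rw [Prod.smul_mk, MulAction.Quotient.smul_mk, MulAction.Quotient.smul_mk]
end

section
/- Let G₀ and H₀ be subgroups of A₅ of orders 12 and 10 respectively. Then G₀ ∩ H₀ has order 2, and consequently A₅ acts transitively on (A₅/G₀) × (A₅/H₀), a set of size 30. -/
/-!
The order of `G₀ ⊓ H₀` divides `gcd(12, 10) = 2`, while its index is at most
`[A₅ : G₀] [A₅ : H₀] = 5 · 6 = 30`, so it has order `2` and index exactly `30`. The stabilizer
of the base point `(G₀, H₀)` of `A₅ ⧸ G₀ × A₅ ⧸ H₀` is `G₀ ⊓ H₀`, so by orbit–stabilizer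
its orbit has `30` elements and is the whole product.
-/

open MulAction Subgroup

section DiagonalAction

variable {G : Type*} [Group G]

theorem stabilizer_mk_one_prod_mk_one (H K : Subgroup G) :
    stabilizer G (((1 : G) : G ⧸ H), ((1 : G) : G ⧸ K)) = H ⊓ K := by
  ext g
  rw [mem_stabilizer_iff, Prod.smul_mk, Prod.mk.injEq, ← mem_stabilizer_iff, ← mem_stabilizer_iff,
    stabilizer_quotient, stabilizer_quotient, mem_inf]

theorem isPretransitive_prod_quotient_of_index_inf_eq {H K : Subgroup G}
    [H.FiniteIndex] [K.FiniteIndex] (h : (H ⊓ K).index = H.index * K.index) :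
    IsPretransitive G ((G ⧸ H) × (G ⧸ K)) := by
  rw [isPretransitive_iff_orbit_eq_univ (((1 : G) : G ⧸ H), ((1 : G) : G ⧸ K))]
  refine Set.eq_of_subset_of_ncard_le (Set.subset_univ _) ?_ Set.finite_univ
  rw [Set.ncard_univ, ← index_stabilizer, stabilizer_mk_one_prod_mk_one, h, Nat.card_prod,
    index_eq_card, index_eq_card]

end DiagonalAction

theorem nat_card_alternatingGroup_fin_five : Nat.card (alternatingGroup (Fin 5)) = 60 := by
  rw [nat_card_alternatingGroup, Nat.card_fin]
  rfl

theorem stmt7 (G₀ H₀ : Subgroup (alternatingGroup (Fin 5)))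
    (hG₀ : Nat.card G₀ = 12) (hH₀ : Nat.card H₀ = 10) :
    Nat.card (G₀ ⊓ H₀ : Subgroup (alternatingGroup (Fin 5))) = 2 ∧
    Nat.card ((alternatingGroup (Fin 5) ⧸ G₀) × (alternatingGroup (Fin 5) ⧸ H₀)) = 30 ∧
    ∀ p q : (alternatingGroup (Fin 5) ⧸ G₀) × (alternatingGroup (Fin 5) ⧸ H₀),
      ∃ a : alternatingGroup (Fin 5), a • p = q := by
  have hA := nat_card_alternatingGroup_fin_five
  have hG₀_index : G₀.index = 5 := by
    have := G₀.card_mul_index; rw [hG₀, hA] at this; omega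
  have hH₀_index : H₀.index = 6 := by
    have := H₀.card_mul_index; rw [hH₀, hA] at this; omega
  have hinf_dvd : Nat.card (G₀ ⊓ H₀ : Subgroup _) ∣ Nat.gcd 12 10 :=
    Nat.dvd_gcd (hG₀ ▸ card_dvd_of_le inf_le_left) (hH₀ ▸ card_dvd_of_le inf_le_right)
  have hinf_index_le : (G₀ ⊓ H₀).index ≤ 30 := by
    simpa only [hG₀_index, hH₀_index] using index_inf_le (H := G₀) (K := H₀)
  have hinf_card_mul_index := (G₀ ⊓ H₀).card_mul_index
  rw [hA] at hinf_card_mul_index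
  have hinf : Nat.card (G₀ ⊓ H₀ : Subgroup _) = 2 := by
    have : Nat.card (G₀ ⊓ H₀ : Subgroup _) ≤ 2 := Nat.le_of_dvd two_pos hinf_dvd
    interval_cases Nat.card (G₀ ⊓ H₀ : Subgroup _) <;> omega
  have hinf_index : (G₀ ⊓ H₀).index = G₀.index * H₀.index := by
    rw [hinf] at hinf_card_mul_index; rw [hG₀_index, hH₀_index]; omega
  have : G₀.FiniteIndex := ⟨by omega⟩
  have : H₀.FiniteIndex := ⟨by omega⟩
  have := isPretransitive_prod_quotient_of_index_inf_eq hinf_index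
  refine ⟨hinf, ?_, fun p q => exists_smul_eq _ p q⟩
  rw [Nat.card_prod, ← index_eq_card, ← index_eq_card, hG₀_index, hH₀_index]
end
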